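/- arXiv:1801.09306 — 7 statements merged into one kernel-verified Lean document; each statement's English description precedes it below -/
import Mathlib

section
/- For any measurable power allocation P : [a, T] → ℝ≥0 with time-average power (1/(T−a))∫_a^T P_t dt = P̄ fixed, the time-average of log₂(1 + γ d P_t / u_t) over [a, T] is maximized by the water-filling allocation P_t = max{ρ − u_t/(dγ), 0}, where ρ is chosen so that the average power equals P̄. -/
open intervalIntegral

lemma key_pointwise (γ d U ρ p : ℝ) (hγ : 0 < γ) (hd : 0 < d) (hU : 0 < U)
    (hρ : 0 < ρ) (hp : 0 ≤ p) :
    Real.logb 2 (1 + γ * d * p / U) ≤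
      Real.logb 2 (1 + γ * d * (max (ρ - U / (d * γ)) 0) / U)
        + (p - max (ρ - U / (d * γ)) 0) / (ρ * Real.log 2) := by
  set W := max (ρ - U / (d * γ)) 0 with hWdef
  have hW : 0 ≤ W := le_max_right _ _
  have hA : 0 < 1 + γ * d * p / U := by positivity
  have hB : 0 < 1 + γ * d * W / U := by positivity
  have hlog2 : 0 < Real.log 2 := Real.log_pos (by norm_num)
  have hdiv : Real.log ((1 + γ * d * p / U) / (1 + γ * d * W / U)) ≤
      (1 + γ * d * p / U) / (1 + γ * d * W / U) - 1 :=
    Real.log_le_sub_one_of_pos (by positivity)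
  rw [Real.log_div hA.ne' hB.ne'] at hdiv
  have hstep : (1 + γ * d * p / U) / (1 + γ * d * W / U) - 1
      = γ * d * (p - W) / (U + γ * d * W) := by
    have h1 : U + γ * d * W > 0 := by positivity
    field_simp
    ring
  have hmain : γ * d * (p - W) / (U + γ * d * W) ≤ (p - W) / ρ := by
    rcases le_or_gt (U / (d * γ)) ρ with h | h
    · have hWeq : W = ρ - U / (d * γ) := max_eq_left (by linarith)
      have hden : U + γ * d * W = γ * d * ρ := by
        rw [hWeq]; field_simp; ring
      rw [hden]
      exact le_of_eq (mul_div_mul_left _ _ (by positivity))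
    · have hWeq : W = 0 := max_eq_right (by linarith)
      have hUge : γ * d * ρ ≤ U := by
        have := (lt_div_iff₀ (by positivity : (0:ℝ) < d * γ)).mp h
        nlinarith
      rw [hWeq]
      simp only [mul_zero, sub_zero, add_zero]
      calc γ * d * p / U ≤ γ * d * p / (γ * d * ρ) :=
            div_le_div_of_nonneg_left (by positivity) (by positivity) hUge
        _ = p / ρ := mul_div_mul_left _ _ (by positivity)
  have hlog : Real.log (1 + γ * d * p / U) ≤ Real.log (1 + γ * d * W / U) + (p - W) / ρ := by
    linarith [hstep ▸ hdiv]
  simp only [Real.logb]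
  rw [← div_div, ← add_div]
  gcongr

/-- Water-filling optimality: among all nonnegative power allocations with the same
time-average power as the water-filling allocation, the water-filling allocation
maximizes the time-average rate. -/
theorem waterfilling_optimal
    (a T d γ c φ : ℝ) (ha : 0 ≤ a) (haT : a < T) (hd : 0 < d) (hγ : 0 < γ)
    (hc : 0 < c) (hφ : 0 < φ)
    (u : ℝ → ℝ) (hu : ∀ t, u t = c + φ * t)
    (ρ : ℝ) (Pwf : ℝ → ℝ) (hPwf : ∀ t, Pwf t = max (ρ - u t / (d * γ)) 0)
    (Pbar : ℝ)
    (hρ : (1 / (T - a)) * ∫ t in a..T, Pwf t = Pbar)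
    (P : ℝ → ℝ) (hPmeas : Measurable P) (hPpos : ∀ t ∈ Set.Icc a T, 0 ≤ P t)
    (hPint : IntervalIntegrable P MeasureTheory.volume a T)
    (hRint : IntervalIntegrable (fun t => Real.logb 2 (1 + γ * d * P t / u t))
      MeasureTheory.volume a T)
    (hPavg : (1 / (T - a)) * ∫ t in a..T, P t = Pbar) :
    (1 / (T - a)) * ∫ t in a..T, Real.logb 2 (1 + γ * d * P t / u t)
      ≤ (1 / (T - a)) * ∫ t in a..T, Real.logb 2 (1 + γ * d * Pwf t / u t) := by
  have hueq : u = fun t => c + φ * t := funext hu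
  subst hueq
  have hPwfeq : Pwf = fun t => max (ρ - (c + φ * t) / (d * γ)) 0 := funext fun t => hPwf t
  subst hPwfeq
  have hT : 0 < T - a := by linarith
  have hinv : (0:ℝ) < 1 / (T - a) := by positivity
  have hlog2 : 0 < Real.log 2 := Real.log_pos (by norm_num)
  have huIcc : Set.uIcc a T = Set.Icc a T := Set.uIcc_of_le haT.le
  have hupos : ∀ t ∈ Set.Icc a T, 0 < c + φ * t := by
    intro t ht
    nlinarith [ht.1]
  -- continuity / integrability of the water-filling pieces
  have hWcont : Continuous (fun t : ℝ => max (ρ - (c + φ * t) / (d * γ)) 0) := by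
    fun_prop
  have hPwfint : IntervalIntegrable (fun t : ℝ => max (ρ - (c + φ * t) / (d * γ)) 0)
      MeasureTheory.volume a T := hWcont.intervalIntegrable a T
  have hGcont : ContinuousOn
      (fun t => Real.logb 2 (1 + γ * d * (max (ρ - (c + φ * t) / (d * γ)) 0) / (c + φ * t)))
      (Set.uIcc a T) := by
    simp only [Real.logb]
    apply ContinuousOn.div_const
    apply ContinuousOn.log
    · apply ContinuousOn.add continuousOn_const
      apply ContinuousOn.div (by fun_prop)
      · fun_prop
      · intro t ht
        rw [huIcc] at ht
        exact (hupos t ht).ne'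
    · intro t ht
      rw [huIcc] at ht
      have h1 := hupos t ht
      have h2 : 0 ≤ max (ρ - (c + φ * t) / (d * γ)) 0 := le_max_right _ _
      positivity
  have hGint : IntervalIntegrable
      (fun t => Real.logb 2 (1 + γ * d * (max (ρ - (c + φ * t) / (d * γ)) 0) / (c + φ * t)))
      MeasureTheory.volume a T := hGcont.intervalIntegrable
  rcases le_or_gt ρ 0 with hρ0 | hρpos
  · -- if ρ ≤ 0 the water-filling allocation is identically zero
    have hW0 : ∀ t ∈ Set.uIcc a T, max (ρ - (c + φ * t) / (d * γ)) 0 = 0 := by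
      intro t ht
      rw [huIcc] at ht
      have h1 := hupos t ht
      have : 0 < (c + φ * t) / (d * γ) := by positivity
      exact max_eq_right (by linarith)
    have hIW : (∫ t in a..T, max (ρ - (c + φ * t) / (d * γ)) 0) = 0 := by
      rw [intervalIntegral.integral_congr (g := fun _ => (0:ℝ)) hW0]
      simp
    have hPbar0 : Pbar = 0 := by rw [← hρ, hIW, mul_zero]
    have hIP : (∫ t in a..T, P t) = 0 := by
      have h3 := hPavg
      rw [hPbar0] at h3
      rcases mul_eq_zero.mp h3 with h | h
      · exact absurd h hinv.ne'
      · exact h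
    have hRHS : (∫ t in a..T,
        Real.logb 2 (1 + γ * d * (max (ρ - (c + φ * t) / (d * γ)) 0) / (c + φ * t))) = 0 := by
      rw [intervalIntegral.integral_congr (g := fun _ => (0:ℝ))]
      · simp
      · intro t ht
        simp only
        rw [hW0 t ht]
        simp
    have hle : ∀ t ∈ Set.Icc a T,
        Real.logb 2 (1 + γ * d * P t / (c + φ * t)) ≤ γ * d / (c * Real.log 2) * P t := by
      intro t ht
      have hU := hupos t ht
      have hP := hPpos t ht
      have hx : 0 ≤ γ * d * P t / (c + φ * t) := by positivity
      have h1 : Real.log (1 + γ * d * P t / (c + φ * t)) ≤ γ * d * P t / (c + φ * t) := by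
        have := Real.log_le_sub_one_of_pos (show 0 < 1 + γ * d * P t / (c + φ * t) by positivity)
        linarith
      have h2 : γ * d * P t / (c + φ * t) ≤ γ * d * P t / c := by
        apply div_le_div_of_nonneg_left (by positivity) hc
        nlinarith [ht.1]
      rw [Real.logb]
      rw [div_le_iff₀ hlog2]
      calc Real.log (1 + γ * d * P t / (c + φ * t)) ≤ γ * d * P t / c := h1.trans h2
        _ = γ * d / (c * Real.log 2) * P t * Real.log 2 := by field_simp
    have hCint : IntervalIntegrable (fun t => γ * d / (c * Real.log 2) * P t)
        MeasureTheory.volume a T := hPint.const_mul _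
    have hmono := intervalIntegral.integral_mono_on haT.le hRint hCint hle
    rw [intervalIntegral.integral_const_mul, hIP, mul_zero] at hmono
    rw [hRHS, mul_zero]
    calc (1 / (T - a)) * ∫ t in a..T, Real.logb 2 (1 + γ * d * P t / (c + φ * t))
        ≤ (1 / (T - a)) * 0 := by
          exact mul_le_mul_of_nonneg_left hmono hinv.le
      _ = 0 := mul_zero _
  · -- main case ρ > 0
    have hkey : ∀ t ∈ Set.Icc a T,
        Real.logb 2 (1 + γ * d * P t / (c + φ * t)) ≤
          Real.logb 2 (1 + γ * d * (max (ρ - (c + φ * t) / (d * γ)) 0) / (c + φ * t))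
            + (P t - max (ρ - (c + φ * t) / (d * γ)) 0) / (ρ * Real.log 2) := by
      intro t ht
      exact key_pointwise γ d (c + φ * t) ρ (P t) hγ hd (hupos t ht) hρpos (hPpos t ht)
    have hDint : IntervalIntegrable
        (fun t => (P t - max (ρ - (c + φ * t) / (d * γ)) 0) / (ρ * Real.log 2))
        MeasureTheory.volume a T := (hPint.sub hPwfint).div_const _
    have hmono := intervalIntegral.integral_mono_on haT.le hRint (hGint.add hDint) hkey
    rw [intervalIntegral.integral_add hGint hDint] at hmono
    have hIPW : (∫ t in a..T, P t) = ∫ t in a..T, max (ρ - (c + φ * t) / (d * γ)) 0 := by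
      have : (1 / (T - a)) * ∫ t in a..T, P t
          = (1 / (T - a)) * ∫ t in a..T, max (ρ - (c + φ * t) / (d * γ)) 0 := by
        rw [hPavg, hρ]
      exact mul_left_cancel₀ hinv.ne' this
    have hzero : (∫ t in a..T,
        (P t - max (ρ - (c + φ * t) / (d * γ)) 0) / (ρ * Real.log 2)) = 0 := by
      rw [intervalIntegral.integral_div, intervalIntegral.integral_sub hPint hPwfint,
        hIPW, sub_self, zero_div]
    rw [hzero, add_zero] at hmono
    exact mul_le_mul_of_nonneg_left hmono hinv.le
end

section
/- For ρ with dγρ ≥ u_c, the integral (1/T)∫_{ηδ}^{T} max{ρ − (u_c + φ(t−ηδ))/(dγ), 0} dt equals [χ(dγρ ≤ u)·(u − dγρ)²/(2dφγT)] + [(u − u_c)/(2dφγT)]·(2dγρ − u − u_c), where χ is the indicator function. -/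
lemma lin_int (c1 c2 p q : ℝ) :
    ∫ t in p..q, (c1 + c2 * t) = c1 * (q - p) + c2 * (q ^ 2 - p ^ 2) / 2 := by
  have h1 : IntervalIntegrable (fun t : ℝ => c2 * t) MeasureTheory.volume p q :=
    (continuous_const.mul continuous_id').intervalIntegrable p q
  rw [intervalIntegral.integral_add intervalIntegrable_const h1,
    intervalIntegral.integral_const_mul, integral_id, intervalIntegral.integral_const]
  simp [smul_eq_mul]
  ring

theorem avg_power_closed_form
    (δ φ d γ u ρ : ℝ) (hδ : 0 < δ) (hφ : 0 < φ) (hd : 0 < d) (hγ : 0 < γ) (hu : 0 < u)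
    (η : ℕ) (hη : 2 ≤ η)
    (uc : ℝ)
    (huc : uc = u / η + (η : ℝ) * δ * φ - δ * φ * (((η : ℝ) - 1) * ((η : ℝ) - 2)) / (2 * η))
    (huc0 : 0 < uc) (hucu : uc ≤ u)
    (T : ℝ) (hT : T = (η : ℝ) * δ + (u - uc) / φ)
    (hρ : d * γ * ρ ≥ uc) :
    (1 / T) * ∫ t in ((η : ℝ) * δ)..T,
        max (ρ - (uc + φ * (t - (η : ℝ) * δ)) / (d * γ)) 0
      = (if d * γ * ρ ≤ u then (u - d * γ * ρ) ^ 2 / (2 * d * φ * γ * T) else 0)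
        + (u - uc) / (2 * d * φ * γ * T) * (2 * d * γ * ρ - u - uc) := by
  have hη2 : (2 : ℝ) ≤ (η : ℝ) := by exact_mod_cast hη
  set a : ℝ := (η : ℝ) * δ with ha
  have ha0 : 0 < a := by nlinarith
  have hdγ : 0 < d * γ := by positivity
  have hdiv0 : 0 ≤ (u - uc) / φ := div_nonneg (by linarith) hφ.le
  have haT : a ≤ T := by rw [hT]; linarith
  have hT0 : 0 < T := by rw [hT]; linarith
  have hTne : T ≠ 0 := ne_of_gt hT0
  have hφTa : φ * (T - a) = u - uc := by rw [hT]; field_simp; ring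
  have hcont : Continuous (fun t : ℝ => max (ρ - (uc + φ * (t - a)) / (d * γ)) 0) := by
    fun_prop
  by_cases hcase : d * γ * ρ ≤ u
  · set t0 : ℝ := a + (d * γ * ρ - uc) / φ with ht0
    have hat0 : a ≤ t0 := by
      rw [ht0]
      have : 0 ≤ (d * γ * ρ - uc) / φ := div_nonneg (by linarith) hφ.le
      linarith
    have ht0T : t0 ≤ T := by
      rw [ht0, hT]
      have : (d * γ * ρ - uc) / φ ≤ (u - uc) / φ := by gcongr <;> linarith
      linarith
    have hφt0 : φ * t0 = φ * a + (d * γ * ρ - uc) := by rw [ht0]; field_simp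
    have hint1 : IntervalIntegrable _ MeasureTheory.volume a t0 := hcont.intervalIntegrable a t0
    have hint2 : IntervalIntegrable _ MeasureTheory.volume t0 T := hcont.intervalIntegrable t0 T
    rw [← intervalIntegral.integral_add_adjacent_intervals hint1 hint2]
    have e1 : (∫ t in a..t0, max (ρ - (uc + φ * (t - a)) / (d * γ)) 0)
        = ∫ t in a..t0, ((ρ - (uc - φ * a) / (d * γ)) + (-(φ / (d * γ))) * t) := by
      apply intervalIntegral.integral_congr
      intro t ht
      dsimp only
      rw [Set.uIcc_of_le hat0] at ht
      obtain ⟨h1, h2⟩ := ht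
      have hmul : φ * t ≤ φ * t0 := mul_le_mul_of_nonneg_left h2 hφ.le
      have hle : (uc + φ * (t - a)) / (d * γ) ≤ ρ := by
        rw [div_le_iff₀ hdγ]; nlinarith
      have hmax : max (ρ - (uc + φ * (t - a)) / (d * γ)) 0
          = ρ - (uc + φ * (t - a)) / (d * γ) := max_eq_left (by linarith)
      rw [hmax]
      field_simp
      ring
    have e2 : (∫ t in t0..T, max (ρ - (uc + φ * (t - a)) / (d * γ)) 0) = 0 := by
      have h0 : (∫ t in t0..T, max (ρ - (uc + φ * (t - a)) / (d * γ)) 0)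
          = ∫ _ in t0..T, (0 : ℝ) := by
        apply intervalIntegral.integral_congr
        intro t ht
        dsimp only
        rw [Set.uIcc_of_le ht0T] at ht
        obtain ⟨h1, h2⟩ := ht
        have hmul : φ * t0 ≤ φ * t := mul_le_mul_of_nonneg_left h1 hφ.le
        have hle : ρ ≤ (uc + φ * (t - a)) / (d * γ) := by
          rw [le_div_iff₀ hdγ]; nlinarith
        exact max_eq_right (by linarith)
      rw [h0]; simp
    rw [e1, e2, lin_int, if_pos hcase, ht0]
    field_simp
    ring
  · have e1 : (∫ t in a..T, max (ρ - (uc + φ * (t - a)) / (d * γ)) 0)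
        = ∫ t in a..T, ((ρ - (uc - φ * a) / (d * γ)) + (-(φ / (d * γ))) * t) := by
      apply intervalIntegral.integral_congr
      intro t ht
      dsimp only
      rw [Set.uIcc_of_le haT] at ht
      obtain ⟨h1, h2⟩ := ht
      have hmul : φ * t ≤ φ * T := mul_le_mul_of_nonneg_left h2 hφ.le
      have hle : (uc + φ * (t - a)) / (d * γ) ≤ ρ := by
        rw [div_le_iff₀ hdγ]; nlinarith
      have hmax : max (ρ - (uc + φ * (t - a)) / (d * γ)) 0
          = ρ - (uc + φ * (t - a)) / (d * γ) := max_eq_left (by linarith)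
      rw [hmax]
      field_simp
      ring
    have hu' : u = uc + φ * (T - a) := by linarith
    rw [e1, lin_int, if_neg hcase, hu']
    field_simp
    ring
end

section
/- For ρ with dγρ ≥ u_c, the integral (1/T)∫_{ηδ}^{T} ln(1 + dγ·max{ρ − u_t/(dγ),0} / u_t) dt, with u_t = u_c + φ(t−ηδ), equals (1/(φT))·[ (u − u_c)(1 + ln(dγρ)) − u·ln u + u_c·ln u_c + χ(dγρ ≤ u)·( u·ln(u/(dγρ)) + dγρ − u ) ]. -/
open Real intervalIntegral

theorem avg_rate_closed_form
    (δ φ d γ u ρ : ℝ) (hδ : 0 < δ) (hφ : 0 < φ) (hd : 0 < d) (hγ : 0 < γ) (hu : 0 < u)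
    (η : ℕ) (hη : 2 ≤ η)
    (uc : ℝ)
    (huc : uc = u / η + (η : ℝ) * δ * φ - δ * φ * (((η : ℝ) - 1) * ((η : ℝ) - 2)) / (2 * η))
    (huc0 : 0 < uc) (hucu : uc ≤ u)
    (T : ℝ) (hT : T = (η : ℝ) * δ + (u - uc) / φ)
    (hρ : d * γ * ρ ≥ uc) :
    (1 / T) * ∫ t in ((η : ℝ) * δ)..T,
        Real.log (1 + d * γ * max (ρ - (uc + φ * (t - (η : ℝ) * δ)) / (d * γ)) 0
          / (uc + φ * (t - (η : ℝ) * δ)))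
      = (1 / (φ * T)) *
        ((u - uc) * (1 + Real.log (d * γ * ρ)) - u * Real.log u + uc * Real.log uc
          + (if d * γ * ρ ≤ u then u * Real.log (u / (d * γ * ρ)) + d * γ * ρ - u else 0)) := by
  set a := d * γ * ρ with ha_def
  have hdγ : 0 < d * γ := mul_pos hd hγ
  have ha : 0 < a := lt_of_lt_of_le huc0 hρ
  -- pointwise rewrite of the integrand
  have hpt : ∀ s : ℝ, 0 < s →
      Real.log (1 + d * γ * max (ρ - s / (d * γ)) 0 / s)
        = Real.log (max a s) - Real.log s := by
    intro s hs
    rcases le_total s a with h | h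
    · have h1 : 0 ≤ ρ - s / (d * γ) := by
        rw [sub_nonneg, div_le_iff₀ hdγ]
        linarith [h, mul_comm ρ (d * γ)]
      rw [max_eq_left h1, max_eq_left h]
      have : 1 + d * γ * (ρ - s / (d * γ)) / s = a / s := by
        field_simp
        ring
      rw [this, Real.log_div ha.ne' hs.ne']
    · have h1 : ρ - s / (d * γ) ≤ 0 := by
        rw [sub_nonpos, le_div_iff₀ hdγ]
        linarith [h, mul_comm ρ (d * γ)]
      rw [max_eq_right h1, max_eq_right h]
      simp
  -- basic positivity
  have hTη : (η : ℝ) * δ ≤ T := by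
    rw [hT]
    have : 0 ≤ (u - uc) / φ := div_nonneg (by linarith) hφ.le
    linarith
  have hT0 : 0 < T := by
    have hη0 : (0:ℝ) < (η : ℝ) := by positivity
    have : 0 < (η : ℝ) * δ := by positivity
    linarith
  -- step 1: congr the integrand to composed form
  have hcongr : (∫ t in ((η : ℝ) * δ)..T,
        Real.log (1 + d * γ * max (ρ - (uc + φ * (t - (η : ℝ) * δ)) / (d * γ)) 0
          / (uc + φ * (t - (η : ℝ) * δ))))
      = ∫ t in ((η : ℝ) * δ)..T,
        (fun s => Real.log (max a s) - Real.log s) (φ * t + (uc - φ * ((η : ℝ) * δ))) := by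
    apply intervalIntegral.integral_congr
    intro t ht
    rw [Set.uIcc_of_le hTη] at ht
    have hst : uc + φ * (t - (η : ℝ) * δ) = φ * t + (uc - φ * ((η : ℝ) * δ)) := by ring
    have hs0 : 0 < uc + φ * (t - (η : ℝ) * δ) := by
      have : 0 ≤ φ * (t - (η : ℝ) * δ) := mul_nonneg hφ.le (by linarith [ht.1])
      linarith
    simp only
    rw [← hst]
    exact hpt _ hs0
  rw [hcongr, intervalIntegral.integral_comp_mul_add
      (fun s => Real.log (max a s) - Real.log s) hφ.ne' (uc - φ * ((η : ℝ) * δ))]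
  have e1 : φ * ((η : ℝ) * δ) + (uc - φ * ((η : ℝ) * δ)) = uc := by ring
  have e2 : φ * T + (uc - φ * ((η : ℝ) * δ)) = u := by
    rw [hT]; field_simp; ring
  rw [e1, e2]
  -- integrability lemmas
  have hcontmax : ∀ p q : ℝ, IntervalIntegrable (fun s => Real.log (max a s))
      MeasureTheory.volume p q := by
    intro p q
    apply ContinuousOn.intervalIntegrable
    apply ContinuousOn.log
    · exact (continuous_const.max continuous_id).continuousOn
    · intro x _
      exact (lt_max_iff.mpr (Or.inl ha)).ne'
  have hcontlog : ∀ p q : ℝ, 0 < p → 0 < q →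
      IntervalIntegrable Real.log MeasureTheory.volume p q := by
    intro p q hp hq
    apply ContinuousOn.intervalIntegrable
    apply ContinuousOn.log continuousOn_id
    intro x hx
    have : min p q ≤ x := hx.1
    have : 0 < x := lt_of_lt_of_le (lt_min hp hq) this
    exact this.ne'
  rw [intervalIntegral.integral_sub (hcontmax uc u) (hcontlog uc u huc0 hu)]
  have hlogint : ∫ s in uc..u, Real.log s = u * Real.log u - uc * Real.log uc - u + uc := by
    apply integral_log
  rw [hlogint]
  by_cases hle : a ≤ u
  · -- split at a
    have hsplit : (∫ s in uc..a, Real.log (max a s))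
        + (∫ s in a..u, Real.log (max a s)) = ∫ s in uc..u, Real.log (max a s) :=
      intervalIntegral.integral_add_adjacent_intervals (hcontmax uc a) (hcontmax a u)
    rw [← hsplit]
    have h1 : (∫ s in uc..a, Real.log (max a s)) = (a - uc) * Real.log a := by
      rw [intervalIntegral.integral_congr (g := fun _ => Real.log a)
        (by intro x hx; rw [Set.uIcc_of_le hρ] at hx; simp only
            rw [max_eq_left hx.2]),
        intervalIntegral.integral_const, smul_eq_mul]
    have h2 : (∫ s in a..u, Real.log (max a s)) = u * Real.log u - a * Real.log a - u + a := by
      rw [intervalIntegral.integral_congr (g := Real.log)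
        (by intro x hx; rw [Set.uIcc_of_le hle] at hx; simp only
            rw [max_eq_right hx.1])]
      apply integral_log
    rw [h1, h2, if_pos hle, Real.log_div hu.ne' ha.ne', smul_eq_mul]
    field_simp
    ring
  · have h1 : (∫ s in uc..u, Real.log (max a s)) = (u - uc) * Real.log a := by
      rw [intervalIntegral.integral_congr (g := fun _ => Real.log a)
        (by intro x hx; rw [Set.uIcc_of_le hucu] at hx; simp only
            rw [max_eq_left (by linarith [hx.2] : x ≤ a)]),
        intervalIntegral.integral_const, smul_eq_mul]
    rw [h1, if_neg hle, smul_eq_mul]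
    field_simp
    ring
end

section
/- For η ≥ 2 an integer and P̂ > 0, define υ_max(η) = (η²+3η−2)/(2(η−1)) + (ηP̂/(η−1))·(1 + √(1 + 2η/P̂)). Then P̂(η, υ, 0) ≤ P̂ holds if and only if υ ≤ υ_max(η), where P̂(η,υ,0) = [η(υ − û)/(2(η−1)(υ + η/2 − 1))]·(υ − û) with û = υ/η + η/2 + 3/2 − 1/η, for υ ≥ (η²+3η−2)/(2(η−1)). -/
set_option maxHeartbeats 1000000


theorem power_constraint_iff_vmax
    (η : ℕ) (hη : 2 ≤ η) (Pmax : ℝ) (hP : 0 < Pmax)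
    (υ : ℝ) (hυ : υ ≥ ((η : ℝ) ^ 2 + 3 * η - 2) / (2 * ((η : ℝ) - 1)))
    (uhat : ℝ) (huhat : uhat = υ / η + (η : ℝ) / 2 + 3 / 2 - 1 / η) :
    (η : ℝ) * (υ - uhat) / (2 * ((η : ℝ) - 1) * (υ + (η : ℝ) / 2 - 1)) * (υ - uhat) ≤ Pmax
      ↔ υ ≤ ((η : ℝ) ^ 2 + 3 * η - 2) / (2 * ((η : ℝ) - 1))
          + (η : ℝ) * Pmax / ((η : ℝ) - 1) * (1 + Real.sqrt (1 + 2 * η / Pmax)) := by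
  subst huhat
  have hn : (2:ℝ) ≤ (η:ℝ) := by exact_mod_cast hη
  set n := (η:ℝ) with hn_def
  have hn0 : (0:ℝ) < n := by linarith
  have hn1 : (0:ℝ) < n - 1 := by linarith
  set C := (n ^ 2 + 3 * n - 2) / (2 * (n - 1)) with hC
  set S := Real.sqrt (1 + 2 * n / Pmax) with hS
  have hSnn : 0 ≤ S := Real.sqrt_nonneg _
  have hS2 : S ^ 2 = 1 + 2 * n / Pmax := Real.sq_sqrt (by positivity)
  have hS1 : 1 ≤ S := by nlinarith [hS2, div_pos (by linarith : (0:ℝ) < 2*n) hP]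
  have hSpos : 0 < S := by linarith
  have hPS : Pmax * S ^ 2 = Pmax + 2 * n := by
    rw [hS2]; field_simp
  have ht : 0 ≤ υ - C := by linarith [hυ]
  have hDpos : 0 < υ + n / 2 - 1 := by
    have h1 : C + n / 2 - 1 = n ^ 2 / (n - 1) := by
      rw [hC]; field_simp; ring
    have h2 : 0 < n ^ 2 / (n - 1) := by positivity
    linarith
  have hne1 : n ≠ 0 := ne_of_gt hn0
  have hne2 : n - 1 ≠ 0 := ne_of_gt hn1
  have hne3 : υ + n / 2 - 1 ≠ 0 := ne_of_gt hDpos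
  have hEq : n * (υ - (υ / n + n / 2 + 3 / 2 - 1 / n)) / (2 * (n - 1) * (υ + n / 2 - 1))
      * (υ - (υ / n + n / 2 + 3 / 2 - 1 / n))
      = (n - 1) * (υ - C) ^ 2 / (2 * n * (υ + n / 2 - 1)) := by
    have hsub : υ - (υ / n + n / 2 + 3 / 2 - 1 / n) = (n - 1) * (υ - C) / n := by
      rw [hC]; field_simp; ring
    rw [hsub, div_mul_eq_mul_div, div_eq_div_iff (by positivity) (by positivity)]
    field_simp
  rw [hEq, div_le_iff₀ (by positivity)]
  have hPD : Pmax * (2 * n * (υ + n / 2 - 1)) * (n - 1)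
      = 2 * n * Pmax * ((υ - C) * (n - 1)) + 2 * n ^ 3 * Pmax := by
    rw [hC]; field_simp; ring
  have hs : 0 ≤ (υ - C) * (n - 1) := mul_nonneg ht hn1.le
  have hq : (n * Pmax * S) ^ 2 = n ^ 2 * Pmax ^ 2 + 2 * n ^ 3 * Pmax := by
    linear_combination (n ^ 2 * Pmax) * hPS
  have hP0 : 0 < n * Pmax * S := by positivity
  constructor
  · intro h
    have h1 : ((υ - C) * (n - 1)) ^ 2
        ≤ 2 * n * Pmax * ((υ - C) * (n - 1)) + 2 * n ^ 3 * Pmax := by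
      nlinarith [mul_le_mul_of_nonneg_right h hn1.le, hPD]
    have h2 : (υ - C) * (n - 1) ≤ n * Pmax * (1 + S) := by
      nlinarith [hq, hs, hP0]
    have h3 : υ - C ≤ n * Pmax * (1 + S) / (n - 1) := by
      rw [le_div_iff₀ hn1]; exact h2
    have hid : n * Pmax * (1 + S) / (n - 1) = n * Pmax / (n - 1) * (1 + S) := by ring
    rw [hid] at h3
    linarith
  · intro h
    have h2 : (υ - C) * (n - 1) ≤ n * Pmax * (1 + S) := by
      rw [← le_div_iff₀ hn1]
      have hid : n * Pmax * (1 + S) / (n - 1) = n * Pmax / (n - 1) * (1 + S) := by ring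
      rw [hid]; linarith
    have h1 : ((υ - C) * (n - 1)) ^ 2
        ≤ 2 * n * Pmax * ((υ - C) * (n - 1)) + 2 * n ^ 3 * Pmax := by
      nlinarith [hq, hs, h2, hS1, mul_pos hn0 hP,
        mul_nonneg (by nlinarith : (0:ℝ) ≤ n * Pmax * S - ((υ - C) * (n - 1) - n * Pmax))
          (by nlinarith : (0:ℝ) ≤ n * Pmax * S + ((υ - C) * (n - 1) - n * Pmax))]
    nlinarith [h1, hPD, hn1]
end

section
/- Let η ≥ 2 be an integer and υ > (η²+3η−2)/(2(η−1)), and set û = υ/η + η/2 + 3/2 − 1/η. Define g(ζ) = (1 − û/(υ(1+ζ)))·( (1+ζ)υ − υ/η + η/2 + 1/2 + 1/η ) − (η+2)·ln( υ(1+ζ)/û ) for ζ > û/υ − 1. Then g is strictly increasing on (û/υ − 1, ∞) and g(ζ) > 0 for all ζ in this interval. -/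
set_option maxHeartbeats 1000000


theorem g_increasing_and_positive
    (η : ℕ) (hη : 2 ≤ η) (υ : ℝ)
    (hυ : υ > ((η : ℝ) ^ 2 + 3 * η - 2) / (2 * ((η : ℝ) - 1)))
    (uhat : ℝ) (huhat : uhat = υ / η + (η : ℝ) / 2 + 3 / 2 - 1 / η)
    (g : ℝ → ℝ)
    (hg : ∀ ζ, g ζ = (1 - uhat / (υ * (1 + ζ))) *
        ((1 + ζ) * υ - υ / η + (η : ℝ) / 2 + 1 / 2 + 1 / η)
      - ((η : ℝ) + 2) * Real.log (υ * (1 + ζ) / uhat)) :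
    StrictMonoOn g (Set.Ioi (uhat / υ - 1)) ∧
    ∀ ζ ∈ Set.Ioi (uhat / υ - 1), 0 < g ζ := by
  have hη2 : (2:ℝ) ≤ (η:ℝ) := by exact_mod_cast hη
  have hηpos : (0:ℝ) < (η:ℝ) := by linarith
  have hηne : (η:ℝ) ≠ 0 := ne_of_gt hηpos
  have hfracpos : 0 < ((η : ℝ) ^ 2 + 3 * η - 2) / (2 * ((η : ℝ) - 1)) := by
    apply div_pos <;> nlinarith
  have hυpos : 0 < υ := lt_trans hfracpos hυ
  have huhatmul : uhat * η = υ + (η:ℝ)^2 / 2 + 3 * η / 2 - 1 := by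
    rw [huhat]; field_simp
  have huhatpos : 0 < uhat := by
    have h1 : 0 < uhat * η := by nlinarith
    by_contra h
    push_neg at h
    nlinarith
  have huhatne : uhat ≠ 0 := ne_of_gt huhatpos
  -- the constant c
  set c : ℝ := -(υ / η) + (η:ℝ)/2 + 1/2 + 1/η with hc
  have hcsum : uhat + c = (η:ℝ) + 2 := by
    rw [huhat, hc]; field_simp; ring
  have hclt : c < uhat := by
    have : (uhat - c) * η = 2 * υ + (η:ℝ) - 2 := by rw [huhat, hc]; field_simp; ring
    nlinarith
  set ζ₀ : ℝ := uhat / υ - 1 with hζ₀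
  have hζ₀x : υ * (1 + ζ₀) = uhat := by rw [hζ₀]; field_simp; ring
  -- derivative
  have hderiv : ∀ ζ : ℝ, 0 < υ * (1 + ζ) →
      HasDerivAt g (uhat * υ / (υ * (1 + ζ))^2 * ((1 + ζ) * υ + c)
        + (1 - uhat / (υ * (1 + ζ))) * υ
        - ((η:ℝ) + 2) * ((υ / uhat) / (υ * (1 + ζ) / uhat))) ζ := by
    intro ζ hx
    have hxne : υ * (1 + ζ) ≠ 0 := ne_of_gt hx
    have hgfun : g = fun ζ => (1 - uhat / (υ * (1 + ζ))) *
        ((1 + ζ) * υ + c) - ((η : ℝ) + 2) * Real.log (υ * (1 + ζ) / uhat) := by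
      funext z
      rw [hg z, hc]; ring
    rw [hgfun]
    have h1 : HasDerivAt (fun ζ : ℝ => υ * (1 + ζ)) υ ζ := by
      simpa using ((hasDerivAt_id ζ).const_add 1).const_mul υ
    have hinv : HasDerivAt (fun ζ : ℝ => uhat / (υ * (1 + ζ)))
        ((0 * (υ * (1 + ζ)) - uhat * υ) / (υ * (1 + ζ))^2) ζ :=
      (hasDerivAt_const ζ uhat).div h1 hxne
    have hF1 : HasDerivAt (fun ζ : ℝ => 1 - uhat / (υ * (1 + ζ)))
        (uhat * υ / (υ * (1 + ζ))^2) ζ := by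
      have := (hasDerivAt_const ζ (1:ℝ)).sub hinv
      refine this.congr_deriv ?_
      ring
    have hF2 : HasDerivAt (fun ζ : ℝ => (1 + ζ) * υ + c) υ ζ := by
      have := (h1.congr_deriv rfl)
      have h2 : HasDerivAt (fun ζ : ℝ => (1 + ζ) * υ) υ ζ := by
        have := ((hasDerivAt_id ζ).const_add 1).mul_const υ
        simpa using this
      simpa using h2.add_const c
    have hF3 : HasDerivAt (fun ζ : ℝ => υ * (1 + ζ) / uhat) (υ / uhat) ζ :=
      h1.div_const uhat
    have hxupos : 0 < υ * (1 + ζ) / uhat := div_pos hx huhatpos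
    have hlog : HasDerivAt (fun ζ : ℝ => Real.log (υ * (1 + ζ) / uhat))
        ((υ / uhat) / (υ * (1 + ζ) / uhat)) ζ := hF3.log (ne_of_gt hxupos)
    exact (hF1.mul hF2).sub (hlog.const_mul ((η:ℝ) + 2))
  -- positivity of the derivative on the open interval
  have hDpos : ∀ ζ : ℝ, ζ₀ < ζ →
      0 < uhat * υ / (υ * (1 + ζ))^2 * ((1 + ζ) * υ + c)
        + (1 - uhat / (υ * (1 + ζ))) * υ
        - ((η:ℝ) + 2) * ((υ / uhat) / (υ * (1 + ζ) / uhat)) := by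
    intro ζ hζ
    have hxgt : uhat < υ * (1 + ζ) := by
      rw [← hζ₀x]
      exact (mul_lt_mul_iff_right₀ hυpos).mpr (by linarith)
    have hx : 0 < υ * (1 + ζ) := lt_trans huhatpos hxgt
    set x := υ * (1 + ζ) with hxdef
    have hxne : x ≠ 0 := ne_of_gt hx
    have key : uhat * υ / x^2 * ((1 + ζ) * υ + c)
        + (1 - uhat / x) * υ
        - ((η:ℝ) + 2) * ((υ / uhat) / (x / uhat))
        = υ * ((x - uhat) * (x - c)) / x^2 := by
      have h2 : (1 + ζ) * υ = x := by rw [hxdef]; ring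
      have hc2 : c = (η:ℝ) + 2 - uhat := by linarith
      rw [h2, hc2]
      field_simp
      ring
    rw [key]
    have : 0 < (x - uhat) * (x - c) := mul_pos (by linarith) (by linarith)
    positivity
  -- strict monotonicity on the closed ray
  have hmonoIci : StrictMonoOn g (Set.Ici ζ₀) := by
    apply strictMonoOn_of_deriv_pos (convex_Ici ζ₀)
    · intro ζ hζ
      have hle : ζ₀ ≤ ζ := hζ
      have hx : 0 < υ * (1 + ζ) := by nlinarith
      exact ((hderiv ζ hx).differentiableAt.continuousAt).continuousWithinAt
    · intro ζ hζ
      rw [interior_Ici] at hζ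
      have hζ' : ζ₀ < ζ := hζ
      have hx : 0 < υ * (1 + ζ) := by nlinarith
      rw [(hderiv ζ hx).deriv]
      exact hDpos ζ hζ'
  have h0 : g ζ₀ = 0 := by
    rw [hg ζ₀, hζ₀x, div_self huhatne, Real.log_one]
    ring
  refine ⟨hmonoIci.mono Set.Ioi_subset_Ici_self, ?_⟩
  intro ζ hζ
  have hζ' : ζ₀ < ζ := hζ
  have := hmonoIci Set.self_mem_Ici (Set.mem_Ici.mpr hζ'.le) hζ'
  linarith
end

section
/- For every integer η ≥ 5 and every real ζ with (−η² + 5η − 2)/((η−1)(η−2)) < ζ < 0, setting υ = (η−1)(η−2)/2, the rate R̂(η−1, υ, ζ̂) strictly exceeds R̂(η, υ, ζ), where ζ̂ is the unique value ≥ û_comm(υ,η−1)/υ − 1 such that P̂(η−1, υ, ζ̂) = P̂(η, υ, ζ); here û_comm(υ,m) = υ/m + m/2 + 3/2 − 1/m, P̂(m,υ,ζ) = m(υ(1+ζ) − û_comm(υ,m))²/(2(m−1)(υ+m/2−1)), and R̂(m,υ,ζ) = [m·û_comm(υ,m)/((m−1)(υ+m/2−1))]·[υ(1+ζ)/û_comm(υ,m)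 − 1 − ln(υ(1+ζ)/û_comm(υ,m))]. -/
open Real Set

noncomputable def uhatComm (m υ : ℝ) : ℝ := υ / m + m / 2 + 3 / 2 - 1 / m

noncomputable def PhatFn (m υ ζ : ℝ) : ℝ :=
  m * (υ * (1 + ζ) - uhatComm m υ) ^ 2 / (2 * (m - 1) * (υ + m / 2 - 1))

noncomputable def RhatFn (m υ ζ : ℝ) : ℝ :=
  m * uhatComm m υ / ((m - 1) * (υ + m / 2 - 1)) *
    (υ * (1 + ζ) / uhatComm m υ - 1 - Real.log (υ * (1 + ζ) / uhatComm m υ))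

lemma hasDeriv_aux (b : ℝ) (s : ℝ) (hs : -1 < s) (hbs : -1 < b*s) :
    HasDerivAt (fun t => b*t - Real.log (1+b*t) - b^2*(t - Real.log (1+t)))
      (b - b/(1+b*s) - b^2*(1 - 1/(1+s))) s := by
  have h1 : HasDerivAt (fun t : ℝ => 1 + b*t) b s := by
    simpa using ((hasDerivAt_id s).const_mul b).const_add 1
  have h2 : HasDerivAt (fun t : ℝ => Real.log (1+b*t)) (b/(1+b*s)) s := by
    simpa [div_eq_mul_inv, mul_comm] using (h1.log (by linarith))
  have h3 : HasDerivAt (fun t : ℝ => 1 + t) 1 s := by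
    simpa using (hasDerivAt_id s).const_add 1
  have h4 : HasDerivAt (fun t : ℝ => Real.log (1+t)) (1/(1+s)) s := by
    simpa [div_eq_mul_inv] using (h3.log (by linarith))
  have h5 : HasDerivAt (fun t : ℝ => b*t) b s := by
    simpa using (hasDerivAt_id s).const_mul b
  have := ((h5.sub h2).sub (((hasDerivAt_id s).sub h4).const_mul (b^2)))
  exact this

lemma key_ineq (b : ℝ) (hb0 : 0 < b) (hb1 : b ≤ 1) (s : ℝ) (hs : 0 ≤ s) :
    b^2 * (s - Real.log (1+s)) ≤ b*s - Real.log (1+b*s) := by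
  set f : ℝ → ℝ := fun t => b*t - Real.log (1+b*t) - b^2*(t - Real.log (1+t)) with hf
  have hmono : MonotoneOn f (Set.Ici (0:ℝ)) := by
    have hd : ∀ t ∈ interior (Set.Ici (0:ℝ)), 0 ≤ deriv f t := by
      intro t ht
      rw [interior_Ici] at ht
      have ht0 : 0 < t := ht
      have hbt : -1 < b*t := by nlinarith
      have hD := hasDeriv_aux b t (by linarith) hbt
      rw [hD.deriv]
      have h1 : 0 < 1 + b*t := by linarith
      have h2 : 0 < 1 + t := by linarith
      have key : b - b/(1+b*t) - b^2*(1 - 1/(1+t))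
          = b^2 * t * (1/(1+b*t) - 1/(1+t)) := by
        field_simp
        ring
      rw [key]
      have : 1/(1+t) ≤ 1/(1+b*t) := by
        apply one_div_le_one_div_of_le h1
        nlinarith
      have hb2t : 0 ≤ b^2 * t := by positivity
      nlinarith
    have hcont : ContinuousOn f (Set.Ici (0:ℝ)) := by
      intro t ht
      have ht0 : (0:ℝ) ≤ t := ht
      have hbt : -1 < b*t := by nlinarith
      exact ((hasDeriv_aux b t (by linarith) hbt).continuousAt).continuousWithinAt
    exact monotoneOn_of_deriv_nonneg (convex_Ici 0) hcont
      (fun t ht => by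
        rw [interior_Ici] at ht
        have hbt : -1 < b*t := by nlinarith [(Set.mem_Ioi.mp ht).le]
        exact (hasDeriv_aux b t (by linarith [(Set.mem_Ioi.mp ht).le]) hbt).differentiableAt.differentiableWithinAt) hd
  have h0 : f 0 ≤ f s := hmono (le_refl (0:ℝ)) hs hs
  simp only [hf] at h0
  simp at h0
  linarith


private lemma pol1 (N : ℝ) (hN : 5 ≤ N) : 0 < N^2 - 2*N - 1 := by nlinarith
private lemma pol2 (N : ℝ) (hN : 5 ≤ N) : 0 < N^2 - N - 1 := by nlinarith
private lemma pol3 (N : ℝ) (hN : 5 ≤ N) : (N^2 - 2*N - 1)*N^2 ≤ (N^2 - N - 1)^2 := by nlinarith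
private lemma pol4 (N : ℝ) (hN : 5 ≤ N) :
    N * ((N-2)*(N^2 - N - 1)) < 2*N^2 * ((N-1)*(N-2)/2) := by nlinarith
private lemma sq_cancel (a d : ℝ) (ha : 0 ≤ a) (hd : 0 < d) (h : a^2 = d^2) : a = d := by
  nlinarith [sq_nonneg (a - d), sq_nonneg (a + d)]

set_option maxHeartbeats 1600000 in
theorem decreasing_eta_improves_rate
    (η : ℕ) (hη : 5 ≤ η) (ζ : ℝ)
    (hζlb : (-(η : ℝ) ^ 2 + 5 * η - 2) / (((η : ℝ) - 1) * ((η : ℝ) - 2)) < ζ)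
    (hζub : ζ < 0)
    (υ : ℝ) (hυ : υ = ((η : ℝ) - 1) * ((η : ℝ) - 2) / 2) :
    ∃ ζhat : ℝ,
      ζhat ≥ uhatComm ((η : ℝ) - 1) υ / υ - 1 ∧
      PhatFn ((η : ℝ) - 1) υ ζhat = PhatFn (η : ℝ) υ ζ ∧
      RhatFn ((η : ℝ) - 1) υ ζhat > RhatFn (η : ℝ) υ ζ ∧
      ∀ z : ℝ, z ≥ uhatComm ((η : ℝ) - 1) υ / υ - 1 →
        PhatFn ((η : ℝ) - 1) υ z = PhatFn (η : ℝ) υ ζ → z = ζhat := by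
  have hN : (5:ℝ) ≤ (η:ℝ) := by exact_mod_cast hη
  obtain ⟨N, hNdef⟩ : ∃ N : ℝ, N = (η : ℝ) := ⟨_, rfl⟩
  rw [← hNdef] at hζlb hυ hN ⊢
  have hN1 : (0:ℝ) < N - 1 := by linarith
  have hN2 : (0:ℝ) < N - 2 := by linarith
  have hN0 : (0:ℝ) < N := by linarith
  have hN1ne : (N:ℝ) - 1 ≠ 0 := ne_of_gt hN1
  have hN2ne : (N:ℝ) - 2 ≠ 0 := ne_of_gt hN2
  have hυpos : 0 < υ := by rw [hυ]; positivity
  have hυne : υ ≠ 0 := ne_of_gt hυpos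
  have hqpos : (0:ℝ) < N^2 - 2*N - 1 := pol1 N hN
  have hqne : (N:ℝ)^2 - 2*N - 1 ≠ 0 := ne_of_gt hqpos
  have hMpos : (0:ℝ) < N^2 - N - 1 := pol2 N hN
  have hMne : (N:ℝ)^2 - N - 1 ≠ 0 := ne_of_gt hMpos
  obtain ⟨u1, hu1def⟩ : ∃ u : ℝ, u = (N^2 - N - 1)/(N - 1) := ⟨_, rfl⟩
  have hu1pos : (0:ℝ) < u1 := by rw [hu1def]; exact div_pos hMpos hN1
  have hu1ne : u1 ≠ 0 := ne_of_gt hu1pos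
  have u1eq : uhatComm (N - 1) υ = u1 := by
    rw [uhatComm, hυ, hu1def]
    field_simp
    ring
  have uneq : uhatComm N υ = N := by
    rw [uhatComm, hυ]
    field_simp
    ring
  obtain ⟨x, hxdef⟩ : ∃ x : ℝ, x = υ * (1 + ζ) := ⟨_, rfl⟩
  have hxN : N < x := by
    have h := (div_lt_iff₀ (by positivity : (0:ℝ) < (N-1)*(N-2))).mp hζlb
    rw [hxdef, hυ]
    nlinarith
  obtain ⟨c, hcdef⟩ : ∃ c : ℝ, c = Real.sqrt (N^2 - 2*N - 1) / (N - 1) := ⟨_, rfl⟩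
  have hcpos : 0 < c := by
    rw [hcdef]; exact div_pos (Real.sqrt_pos.mpr hqpos) hN1
  have hc2 : c^2 = (N^2 - 2*N - 1)/(N-1)^2 := by
    rw [hcdef, div_pow, Real.sq_sqrt hqpos.le]
  obtain ⟨ζhat, hzdef⟩ : ∃ zh : ℝ, zh = (u1 + c*(x - N))/υ - 1 := ⟨_, rfl⟩
  have hy : υ * (1 + ζhat) = u1 + c*(x - N) := by
    rw [hzdef]
    field_simp
    ring
  -- bullet 1
  have hb1' : ζhat ≥ uhatComm (N - 1) υ / υ - 1 := by
    rw [u1eq, hzdef]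
    have h1 : u1/υ ≤ (u1 + c*(x-N))/υ := by
      gcongr
      nlinarith
    linarith
  -- bullet 2
  have hbase : υ * (1 + ζhat) - uhatComm (N - 1) υ = c*(x - N) := by
    rw [hy, u1eq]; ring
  have hDeq : 2*(N - 1 - 1)*(υ + (N-1)/2 - 1) = (N-2)*(N^2 - 2*N - 1) := by
    rw [hυ]; ring
  have hP1 : PhatFn (N - 1) υ ζhat = (x - N)^2/((N-1)*(N-2)) := by
    rw [PhatFn, hbase, mul_pow, hc2, hDeq]
    rw [div_eq_div_iff (mul_ne_zero hN2ne hqne) (mul_ne_zero hN1ne hN2ne)]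
    field_simp
  have hbase2 : υ * (1 + ζ) - uhatComm N υ = x - N := by
    rw [uneq, hxdef]
  have hP2 : PhatFn N υ ζ = (x - N)^2/((N-1)*(N-2)) := by
    have hDeq2 : 2*(N - 1)*(υ + N/2 - 1) = N*((N-1)*(N-2)) := by
      rw [hυ]; ring
    rw [PhatFn, hbase2, hDeq2]
    rw [div_eq_div_iff (by exact mul_ne_zero (ne_of_gt hN0) (mul_ne_zero hN1ne hN2ne)) (mul_ne_zero hN1ne hN2ne)]
    ring
  have hPeq : PhatFn (N - 1) υ ζhat = PhatFn N υ ζ := by rw [hP1, hP2]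
  -- bullet 3 : rates
  obtain ⟨s, hsdef⟩ : ∃ s : ℝ, s = x/N - 1 := ⟨_, rfl⟩
  have hspos : 0 < s := by
    rw [hsdef]
    have : 1 < x/N := (one_lt_div hN0).mpr hxN
    linarith
  have hxs : x/N = 1 + s := by rw [hsdef]; ring
  obtain ⟨b, hbdef⟩ : ∃ b : ℝ, b = c*N/u1 := ⟨_, rfl⟩
  have hb0 : 0 < b := by
    rw [hbdef]; exact div_pos (mul_pos hcpos hN0) hu1pos
  have hb2 : b^2 = (N^2 - 2*N - 1)*N^2/(N^2 - N - 1)^2 := by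
    rw [hbdef, hu1def, div_pow, mul_pow, hc2, div_pow]
    field_simp
  have hb2le : b^2 ≤ 1 := by
    rw [hb2, div_le_one (by positivity)]
    exact pol3 N hN
  have hb1 : b ≤ 1 := by nlinarith [hb2le, hb0]
  have harg : υ * (1 + ζhat) / u1 = 1 + b*s := by
    rw [hy, hbdef, hsdef]
    field_simp
  have hRn1 : RhatFn (N - 1) υ ζhat = ((N-1) * u1 / ((N - 1 - 1) * (υ + (N-1)/2 - 1))) * (b*s - Real.log (1 + b*s)) := by
    rw [RhatFn, u1eq, harg]
    ring
  have harg2 : υ * (1 + ζ) / N = 1 + s := by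
    rw [← hxdef, hxs]
  have hRn2 : RhatFn N υ ζ = (N/υ) * (s - Real.log (1 + s)) := by
    rw [RhatFn, uneq, harg2]
    have hpre : N * N / ((N - 1) * (υ + N / 2 - 1)) = N/υ := by
      rw [hυ, show ((N:ℝ)-1)*((N-1)*(N-2)/2 + N/2 - 1) = N*((N-1)*(N-2)/2) from by ring]
      rw [mul_div_mul_left _ _ (ne_of_gt hN0)]
    rw [hpre]
    ring
  have hgpos : 0 < s - Real.log (1 + s) := by
    have := Real.log_lt_sub_one_of_pos (show (0:ℝ) < 1 + s by linarith)
      (by intro h; rw [show (1:ℝ)+s = 1 ↔ s = 0 from by constructor <;> intro <;> linarith] at h; linarith)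
    linarith
  have hdenpos : (0:ℝ) < (N - 1 - 1) * (υ + (N-1)/2 - 1) := by
    have h5 : (N - 1 - 1) * (υ + (N-1)/2 - 1) = (N-2)*(N^2-2*N-1)/2 := by rw [hυ]; ring
    rw [h5]
    positivity
  have hApos : 0 < (N-1) * u1 / ((N - 1 - 1) * (υ + (N-1)/2 - 1)) :=
    div_pos (mul_pos hN1 hu1pos) hdenpos
  have hNu1 : (N-1)*u1 = N^2 - N - 1 := by rw [hu1def]; field_simp
  have hAb : N/υ < ((N-1) * u1 / ((N - 1 - 1) * (υ + (N-1)/2 - 1))) * b^2 := by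
    have hsimp : ((N-1) * u1 / ((N - 1 - 1) * (υ + (N-1)/2 - 1))) * b^2
        = 2*N^2/((N-2)*(N^2 - N - 1)) := by
      rw [hb2, hNu1,
        show ((N:ℝ) - 1 - 1) * (υ + (N-1)/2 - 1) = (N-2)*(N^2-2*N-1)/2 from by rw [hυ]; ring]
      rw [div_mul_div_comm,
        div_eq_div_iff
          (by exact mul_ne_zero (div_ne_zero (mul_ne_zero hN2ne hqne) two_ne_zero) (pow_ne_zero 2 hMne))
          (mul_ne_zero hN2ne hMne)]
      ring
    rw [hsimp, div_lt_div_iff₀ hυpos (mul_pos hN2 hMpos), hυ]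
    exact pol4 N hN
  have hkey := key_ineq b hb0 hb1 s hspos.le
  have hRgt : RhatFn (N - 1) υ ζhat > RhatFn N υ ζ := by
    rw [hRn1, hRn2]
    have h1 : ((N-1) * u1 / ((N - 1 - 1) * (υ + (N-1)/2 - 1))) * (b^2 * (s - Real.log (1+s))) ≤ ((N-1) * u1 / ((N - 1 - 1) * (υ + (N-1)/2 - 1))) * (b*s - Real.log (1 + b*s)) :=
      mul_le_mul_of_nonneg_left hkey hApos.le
    have h2 : (N/υ) * (s - Real.log (1+s)) < (((N-1) * u1 / ((N - 1 - 1) * (υ + (N-1)/2 - 1))) * b^2) * (s - Real.log (1+s)) :=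
      mul_lt_mul_of_pos_right hAb hgpos
    have h3 : (((N-1) * u1 / ((N - 1 - 1) * (υ + (N-1)/2 - 1))) * b^2) * (s - Real.log (1+s))
        = ((N-1) * u1 / ((N - 1 - 1) * (υ + (N-1)/2 - 1))) * (b^2 * (s - Real.log (1+s))) := by
      ring
    linarith [h1, h2, h3]
  -- bullet 4 : uniqueness
  refine ⟨ζhat, hb1', hPeq, hRgt, ?_⟩
  intro z hz hPz
  have hzge : 0 ≤ υ * (1 + z) - u1 := by
    rw [u1eq] at hz
    have h3 : υ*(u1/υ) = u1 := by field_simp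
    have h4 := mul_le_mul_of_nonneg_left (show u1/υ ≤ 1+z by linarith) hυpos.le
    rw [h3] at h4
    linarith
  have hcx : 0 < c * (x - N) := mul_pos hcpos (by linarith)
  rw [PhatFn, u1eq, hDeq, hP2] at hPz
  have ha2 : (υ*(1+z) - u1)^2 = (c*(x - N))^2 := by
    rw [mul_pow, hc2]
    have h := (div_eq_div_iff (mul_ne_zero hN2ne hqne) (mul_ne_zero hN1ne hN2ne)).mp hPz
    rw [div_mul_eq_mul_div, eq_div_iff (pow_ne_zero 2 hN1ne)]
    exact mul_right_cancel₀ hN2ne (by linear_combination h)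
  have had := sq_cancel _ _ hzge hcx ha2
  have heq : υ*(1+z) = υ*(1+ζhat) := by rw [hy]; linarith
  have := mul_left_cancel₀ hυne heq
  linarith
end

section
/- For every integer η ≥ 2, the function g(x) = −(η−1)·x(η+2+x)/(η²+3η−2+2ηx) + (η/2+1)·ln(1 + (η−1)x/(η²/2 + 3η/2 − 1 + x)) is strictly decreasing on x > 0; consequently g(x) < g(0) = 0 for all x > 0. -/
noncomputable def gDerivAux (c x : ℝ) : ℝ :=
  (c - 1) * (-(2 * x * (2 * c * (c ^ 2 + 3 * c - 2) + (c + 2) * (c ^ 2 + 3 * c - 2) * x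
      + 2 * c * x ^ 2))) /
    ((c ^ 2 + 3 * c - 2 + 2 * c * x) ^ 2 * (c ^ 2 + 3 * c - 2 + 2 * x))

set_option maxHeartbeats 2000000 in
theorem g_decreasing_and_negative (η : ℕ) (hη : 2 ≤ η)
    (g : ℝ → ℝ)
    (hg : ∀ x, g x = -((η : ℝ) - 1) * (x * ((η : ℝ) + 2 + x))
        / ((η : ℝ) ^ 2 + 3 * η - 2 + 2 * η * x)
      + ((η : ℝ) / 2 + 1) *
        Real.log (1 + ((η : ℝ) - 1) * x / ((η : ℝ) ^ 2 / 2 + 3 * η / 2 - 1 + x))) :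
    StrictAntiOn g (Set.Ioi (0 : ℝ)) ∧ g 0 = 0 ∧ ∀ x > (0 : ℝ), g x < 0 := by
  have hc : (2 : ℝ) ≤ (η : ℝ) := by exact_mod_cast hη
  set c : ℝ := (η : ℝ) with hcdef
  have hgfun : g = fun x => -(c - 1) * (x * (c + 2 + x)) / (c ^ 2 + 3 * c - 2 + 2 * c * x)
      + (c / 2 + 1) * Real.log (1 + (c - 1) * x / (c ^ 2 / 2 + 3 * c / 2 - 1 + x)) :=
    funext hg
  -- positivity of denominators for x ≥ 0
  have hden1 : ∀ x : ℝ, 0 ≤ x → 0 < c ^ 2 + 3 * c - 2 + 2 * c * x := by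
    intro x hx; nlinarith
  have hden2 : ∀ x : ℝ, 0 ≤ x → 0 < c ^ 2 / 2 + 3 * c / 2 - 1 + x := by
    intro x hx; nlinarith
  have harg : ∀ x : ℝ, 0 ≤ x → 0 < 1 + (c - 1) * x / (c ^ 2 / 2 + 3 * c / 2 - 1 + x) := by
    intro x hx
    have h2 := hden2 x hx
    have : 0 ≤ (c - 1) * x / (c ^ 2 / 2 + 3 * c / 2 - 1 + x) :=
      div_nonneg (by nlinarith) h2.le
    linarith
  -- derivative of g at every x ≥ 0
  have hderiv : ∀ x : ℝ, 0 ≤ x → HasDerivAt g (gDerivAux c x) x := by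
    intro x hx
    have h1 := hden1 x hx
    have h2 := hden2 x hx
    have h3 := harg x hx
    have hDx : (0:ℝ) < c ^ 2 + 3 * c - 2 + 2 * x := by nlinarith
    have hqval : 1 + (c - 1) * x / (c ^ 2 / 2 + 3 * c / 2 - 1 + x)
        = (c ^ 2 + 3 * c - 2 + 2 * c * x) / (c ^ 2 + 3 * c - 2 + 2 * x) := by
      rw [add_div' _ _ _ h2.ne', div_eq_div_iff h2.ne' hDx.ne']
      ring
    have hnum : HasDerivAt (fun x : ℝ => -(c - 1) * (x * (c + 2 + x)))
        (-(c - 1) * (1 * (c + 2 + x) + x * (0 + 1))) x :=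
      (((hasDerivAt_id x).mul ((hasDerivAt_const x (c + 2)).add (hasDerivAt_id x)))).const_mul
        (-(c - 1))
    have hdenD : HasDerivAt (fun x : ℝ => c ^ 2 + 3 * c - 2 + 2 * c * x)
        (0 + 2 * c * 1) x :=
      (hasDerivAt_const x (c ^ 2 + 3 * c - 2)).add ((hasDerivAt_id x).const_mul (2 * c))
    have hf1 : HasDerivAt
        (fun x : ℝ => -(c - 1) * (x * (c + 2 + x)) / (c ^ 2 + 3 * c - 2 + 2 * c * x))
        (-((c - 1) * (2 * c * x ^ 2 + 2 * (c ^ 2 + 3 * c - 2) * x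
            + (c + 2) * (c ^ 2 + 3 * c - 2))) / (c ^ 2 + 3 * c - 2 + 2 * c * x) ^ 2) x := by
      convert hnum.div hdenD h1.ne' using 1
      · rfl
      · rfl
      · rfl
      rw [div_eq_div_iff (pow_ne_zero 2 h1.ne') (pow_ne_zero 2 h1.ne')]
      ring
    have hinnden : HasDerivAt (fun x : ℝ => c ^ 2 / 2 + 3 * c / 2 - 1 + x) (0 + 1) x :=
      (hasDerivAt_const x (c ^ 2 / 2 + 3 * c / 2 - 1)).add (hasDerivAt_id x)
    have hinnnum : HasDerivAt (fun x : ℝ => (c - 1) * x) ((c - 1) * 1) x :=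
      (hasDerivAt_id x).const_mul (c - 1)
    have hq : HasDerivAt (fun x : ℝ => 1 + (c - 1) * x / (c ^ 2 / 2 + 3 * c / 2 - 1 + x))
        ((c - 1) * (c ^ 2 / 2 + 3 * c / 2 - 1) / (c ^ 2 / 2 + 3 * c / 2 - 1 + x) ^ 2) x := by
      convert ((hasDerivAt_const x (1:ℝ)).add (hinnnum.div hinnden h2.ne')) using 1
      · rfl
      · rfl
      · rfl
      rw [zero_add]
      congr 1
      ring
    have hlog : HasDerivAt
        (fun x : ℝ => Real.log (1 + (c - 1) * x / (c ^ 2 / 2 + 3 * c / 2 - 1 + x)))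
        (2 * (c - 1) * (c ^ 2 + 3 * c - 2) /
          ((c ^ 2 + 3 * c - 2 + 2 * x) * (c ^ 2 + 3 * c - 2 + 2 * c * x))) x := by
      convert hq.log h3.ne' using 1
      rw [hqval, div_div_eq_mul_div, div_mul_eq_mul_div, div_div,
        div_eq_div_iff (mul_ne_zero hDx.ne' h1.ne')
          (mul_ne_zero (pow_ne_zero 2 h2.ne') h1.ne')]
      ring
    have hsum := hf1.add (hlog.const_mul (c / 2 + 1))
    rw [hgfun]
    convert hsum using 1
    · rfl
    · rfl
    · rfl
    rw [gDerivAux, mul_div_assoc',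
      div_add_div _ _ (pow_ne_zero 2 h1.ne') (mul_ne_zero hDx.ne' h1.ne'),
      div_eq_div_iff (mul_ne_zero (pow_ne_zero 2 h1.ne') hDx.ne')
        (mul_ne_zero (pow_ne_zero 2 h1.ne') (mul_ne_zero hDx.ne' h1.ne'))]
    ring
  -- deriv is negative on Ioi 0
  have hneg : ∀ x : ℝ, 0 < x → gDerivAux c x < 0 := by
    intro x hx
    have h1 := hden1 x hx.le
    have hDx : 0 < c ^ 2 + 3 * c - 2 + 2 * x := by nlinarith
    apply div_neg_of_neg_of_pos
    · have hD : (0 : ℝ) < c ^ 2 + 3 * c - 2 := by nlinarith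
      have hc0 : (0:ℝ) < c := by linarith
      have hS : 0 < 2 * c * (c ^ 2 + 3 * c - 2)
          + (c + 2) * (c ^ 2 + 3 * c - 2) * x + 2 * c * x ^ 2 := by
        nlinarith [mul_pos hc0 hD, mul_nonneg (mul_nonneg (by linarith : (0:ℝ) ≤ c + 2) hD.le) hx.le,
          mul_pos hc0 (mul_pos hx hx)]
      nlinarith [mul_pos (show (0:ℝ) < c - 1 by linarith) (mul_pos hx hS), mul_pos hx hS]
    · positivity
  have hanti : StrictAntiOn g (Set.Ici (0 : ℝ)) := by
    apply strictAntiOn_of_deriv_neg (convex_Ici 0)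
    · exact fun x hx => ((hderiv x hx).continuousAt).continuousWithinAt
    · intro x hx
      rw [interior_Ici] at hx
      rw [(hderiv x (le_of_lt hx)).deriv]
      exact hneg x hx
  have hg0 : g 0 = 0 := by
    rw [hg 0]
    simp
  refine ⟨hanti.mono (Set.Ioi_subset_Ici le_rfl), hg0, fun x hx => ?_⟩
  have := hanti (Set.self_mem_Ici) (Set.mem_Ici.mpr hx.le) hx
  rwa [hg0] at this
end
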